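/- Suppose f : Π^{n₁×n₁} × ⋯ × Π^{n_N×n_N} → L(U) satisfies f(tZ) = t f(Z) for all t > 0, and there are maps φ_k with values in L(U, ℂ^{n_k} ⊗ M) such that f(Z) + f(Λ)* = Σ_{k=1}^N φ_k(Λ)* ((Z_k + Λ_k*) ⊗ I_M) φ_k(Z) for all Z, Λ, and f(X) = f(X)* for all tuples X of positive definite matrices. Then for every tuple X of positive definite matrices and every t > 0, Σ_k [φ_k(tX) − φ_k(X)]* (X_k ⊗ I_M) [φ_k(tX) − φ_k(X)] = 0; consequently (since each X_k ⊗ I_M has positive definite real part) φ_k(tX) = φ_k(X) for all k. -/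

import Mathlib

set_option synthInstance.maxHeartbeats 1000000
open scoped Matrix ComplexOrder

/-- Completeness of the `L²` product of finitely many complete normed groups. -/
instance piLpCompleteSpace {ι : Type*} [Fintype ι] (X : ι → Type*)
    [∀ i, NormedAddCommGroup (X i)] [∀ i, CompleteSpace (X i)] :
    CompleteSpace (PiLp 2 X) := by
  have e : PiLp 2 X ≃ᵤ (∀ i, X i) :=
    { toEquiv := WithLp.equiv 2 _
      uniformContinuous_toFun := PiLp.uniformContinuous_ofLp 2 _
      uniformContinuous_invFun := PiLp.uniformContinuous_toLp 2 _ }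
  exact e.completeSpace_iff.mpr inferInstance

/-- The operator `Z ⊗ I_M` on `ℂ^m ⊗ M`, modelled as `PiLp 2 (fun _ : Fin m => M)`. -/
noncomputable def matOp {m : ℕ} {M : Type*} [NormedAddCommGroup M] [InnerProductSpace ℂ M]
    (Z : Matrix (Fin m) (Fin m) ℂ) :
    PiLp 2 (fun _ : Fin m => M) →L[ℂ] PiLp 2 (fun _ : Fin m => M) :=
  (((PiLp.continuousLinearEquiv 2 ℂ (fun _ : Fin m => M)).symm :
      (∀ _ : Fin m, M) →L[ℂ] PiLp 2 (fun _ : Fin m => M)).comp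
    (ContinuousLinearMap.pi fun i => ∑ j, Z i j • ContinuousLinearMap.proj j)).comp
    ((PiLp.continuousLinearEquiv 2 ℂ (fun _ : Fin m => M)) :
      PiLp 2 (fun _ : Fin m => M) →L[ℂ] (∀ _ : Fin m, M))

/-! Specialising the decomposition of `f` to `Z = a X`, `Λ = b X` with `a, b > 0` gives
`f(aX) + f(bX)* = (a + b) Σₖ φₖ(bX)* (Xₖ ⊗ I_M) φₖ(aX)`, while homogeneity and symmetry turn the
left side into `(a + b) f(X)`. So `Σₖ φₖ(bX)* (Xₖ ⊗ I_M) φₖ(aX) = f(X)` independently of `a, b`,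
and expanding `Σₖ [φₖ(tX) − φₖ(X)]* (Xₖ ⊗ I_M) [φₖ(tX) − φₖ(X)]` into four such sums gives
`f(X) − f(X) − f(X) + f(X) = 0`. Writing `Xₖ = Bₖ* Bₖ`, the `k`-th summand evaluated at `u`
against `u` is `‖(Bₖ ⊗ I_M)(φₖ(tX) − φₖ(X))u‖²`, so all of them vanish, and `Xₖ ⊗ I_M` is
invertible. -/

open ContinuousLinearMap

open scoped MatrixOrder in
lemma Matrix.PosSemidef.exists_eq_conjTranspose_mul_self {ι : Type*} [Fintype ι] [DecidableEq ι]
    {A : Matrix ι ι ℂ} (hA : A.PosSemidef) : ∃ B : Matrix ι ι ℂ, A = Bᴴ * B :=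
  CStarAlgebra.nonneg_iff_eq_star_mul_self.mp hA.nonneg

lemma Matrix.PosDef.add_conjTranspose {ι : Type*} [Fintype ι] {A : Matrix ι ι ℂ}
    (hA : A.PosDef) : (A + Aᴴ).PosDef := by
  rw [hA.isHermitian.eq]
  exact hA.add hA

section MatOp

variable {m : ℕ} {M : Type*} [NormedAddCommGroup M] [InnerProductSpace ℂ M]

lemma matOp_apply (Z : Matrix (Fin m) (Fin m) ℂ) (v : PiLp 2 (fun _ : Fin m => M)) (i : Fin m) :
    matOp Z v i = ∑ j, Z i j • v j := by
  simp [matOp]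

lemma matOp_smul (c : ℂ) (Z : Matrix (Fin m) (Fin m) ℂ) :
    matOp (c • Z) = c • (matOp Z : PiLp 2 (fun _ : Fin m => M) →L[ℂ] _) := by
  ext v i
  simp [matOp_apply, Finset.smul_sum, smul_smul]

lemma matOp_one :
    matOp (1 : Matrix (Fin m) (Fin m) ℂ) =
      ContinuousLinearMap.id ℂ (PiLp 2 (fun _ : Fin m => M)) := by
  ext v i
  simp [matOp_apply, Matrix.one_apply]

lemma matOp_mul (Z W : Matrix (Fin m) (Fin m) ℂ) :
    matOp (Z * W) = (matOp Z : PiLp 2 (fun _ : Fin m => M) →L[ℂ] _) ∘L matOp W := by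
  ext v i
  simp only [comp_apply, matOp_apply, Matrix.mul_apply, Finset.sum_smul, Finset.smul_sum,
    smul_smul]
  rw [Finset.sum_comm]

lemma matOp_injective {A : Matrix (Fin m) (Fin m) ℂ} (hA : IsUnit A) :
    Function.Injective (matOp A : PiLp 2 (fun _ : Fin m => M) →L[ℂ] _) := by
  refine Function.LeftInverse.injective (g := matOp A⁻¹) fun v => ?_
  rw [← comp_apply, ← matOp_mul,
    Matrix.nonsing_inv_mul A ((Matrix.isUnit_iff_isUnit_det A).mp hA), matOp_one, id_apply]

variable [CompleteSpace M]

lemma adjoint_matOp (Z : Matrix (Fin m) (Fin m) ℂ) :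
    adjoint (matOp Z : PiLp 2 (fun _ : Fin m => M) →L[ℂ] _) = matOp Zᴴ := by
  symm
  rw [eq_adjoint_iff]
  intro x y
  simp only [PiLp.inner_apply, matOp_apply, inner_sum, sum_inner, inner_smul_left,
    inner_smul_right, Matrix.conjTranspose_apply]
  rw [Finset.sum_comm]
  simp [RCLike.star_def]

lemma inner_matOp_conjTranspose_mul_self (B : Matrix (Fin m) (Fin m) ℂ)
    (v : PiLp 2 (fun _ : Fin m => M)) :
    inner ℂ (matOp (Bᴴ * B) v) v = (‖matOp B v‖ : ℂ) ^ 2 := by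
  rw [matOp_mul, comp_apply, ← Matrix.conjTranspose_conjTranspose B, ← adjoint_matOp,
    Matrix.conjTranspose_conjTranspose, adjoint_inner_left, inner_self_eq_norm_sq_to_K]
  rfl

lemma inner_matOp_self_nonneg {A : Matrix (Fin m) (Fin m) ℂ} (hA : A.PosSemidef)
    (v : PiLp 2 (fun _ : Fin m => M)) : 0 ≤ inner ℂ (matOp A v) v := by
  obtain ⟨B, rfl⟩ := hA.exists_eq_conjTranspose_mul_self
  rw [inner_matOp_conjTranspose_mul_self]
  exact_mod_cast sq_nonneg ‖matOp B v‖

lemma eq_zero_of_inner_matOp_self_eq_zero {A : Matrix (Fin m) (Fin m) ℂ} (hA : A.PosDef)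
    {v : PiLp 2 (fun _ : Fin m => M)} (h : inner ℂ (matOp A v) v = 0) : v = 0 := by
  obtain ⟨B, rfl⟩ := hA.posSemidef.exists_eq_conjTranspose_mul_self
  rw [inner_matOp_conjTranspose_mul_self] at h
  have hBv : matOp B v = 0 :=
    norm_eq_zero.mp (by exact_mod_cast pow_eq_zero_iff two_ne_zero |>.mp h)
  refine matOp_injective hA.isUnit ?_
  rw [map_zero, matOp_mul, comp_apply, hBv, map_zero]

end MatOp

section Hilbert

variable {U : Type*} [NormedAddCommGroup U] [InnerProductSpace ℂ U] [CompleteSpace U]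
  {M : Type*} [NormedAddCommGroup M] [InnerProductSpace ℂ M] [CompleteSpace M]

lemma adjoint_sub_comp_comp_sub {E : Type*} [NormedAddCommGroup E] [InnerProductSpace ℂ E]
    [CompleteSpace E] (L : E →L[ℂ] E) (S T : U →L[ℂ] E) :
    adjoint (S - T) ∘L (L ∘L (S - T)) =
      adjoint S ∘L (L ∘L S) - adjoint T ∘L (L ∘L S) - adjoint S ∘L (L ∘L T)
        + adjoint T ∘L (L ∘L T) := by
  simp only [map_sub, sub_comp, comp_sub]
  abel

lemma eq_zero_of_sum_adjoint_comp_matOp_comp_eq_zero {ι : Type*} [Fintype ι] {m : ι → ℕ}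
    {A : ∀ i, Matrix (Fin (m i)) (Fin (m i)) ℂ} (hA : ∀ i, (A i).PosDef)
    {D : ∀ i, U →L[ℂ] PiLp 2 (fun _ : Fin (m i) => M)}
    (h : ∑ i, adjoint (D i) ∘L (matOp (A i) ∘L D i) = 0) (i : ι) : D i = 0 := by
  ext u : 1
  have hsum : ∑ i, inner ℂ (matOp (A i) (D i u)) (D i u) = 0 := by
    simpa only [sum_apply, comp_apply, sum_inner, adjoint_inner_left, zero_apply,
      inner_zero_left] using congrArg (fun T : U →L[ℂ] U => inner ℂ (T u) u) h
  rw [Finset.sum_eq_zero_iff_of_nonneg fun i _ => inner_matOp_self_nonneg (hA i).posSemidef _]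
    at hsum
  exact eq_zero_of_inner_matOp_self_eq_zero (hA i) (hsum i (Finset.mem_univ i))

end Hilbert

lemma sum_adjoint_phi_smul_comp_matOp_comp_phi_smul {N : ℕ} {n : Fin N → ℕ} {U M : Type*}
    [NormedAddCommGroup U] [InnerProductSpace ℂ U] [CompleteSpace U]
    [NormedAddCommGroup M] [InnerProductSpace ℂ M] [CompleteSpace M]
    {f : (∀ k, Matrix (Fin (n k)) (Fin (n k)) ℂ) → (U →L[ℂ] U)}
    {φ : ∀ k, (∀ k', Matrix (Fin (n k')) (Fin (n k')) ℂ) →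
      (U →L[ℂ] PiLp 2 (fun _ : Fin (n k) => M))}
    (hhomf : ∀ t : ℝ, 0 < t → ∀ Z : ∀ k, Matrix (Fin (n k)) (Fin (n k)) ℂ,
      (∀ k, ((Z k) + (Z k)ᴴ).PosDef) → f (fun k => (t : ℂ) • Z k) = (t : ℂ) • f Z)
    (hdec : ∀ Z Λ : ∀ k, Matrix (Fin (n k)) (Fin (n k)) ℂ,
      (∀ k, ((Z k) + (Z k)ᴴ).PosDef) → (∀ k, ((Λ k) + (Λ k)ᴴ).PosDef) →
      f Z + adjoint (f Λ) = ∑ k, adjoint (φ k Λ) ∘L (matOp ((Z k) + (Λ k)ᴴ) ∘L φ k Z))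
    {X : ∀ k, Matrix (Fin (n k)) (Fin (n k)) ℂ} (hX : ∀ k, (X k).PosDef)
    (hsym : adjoint (f X) = f X) {a b : ℝ} (ha : 0 < a) (hb : 0 < b) :
    ∑ k, adjoint (φ k (fun k' => (b : ℂ) • X k')) ∘L
      (matOp (X k) ∘L φ k (fun k' => (a : ℂ) • X k')) = f X := by
  have hsmul : ∀ {c : ℝ}, 0 < c → ∀ k, ((c : ℂ) • X k + ((c : ℂ) • X k)ᴴ).PosDef :=
    fun hc k => ((hX k).smul (Complex.zero_lt_real.mpr hc)).add_conjTranspose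
  have hf : ∀ {c : ℝ}, 0 < c → f (fun k => (c : ℂ) • X k) = (c : ℂ) • f X :=
    fun hc => hhomf _ hc X fun k => (hX k).add_conjTranspose
  have hscalar : ∀ k, (a : ℂ) • X k + ((b : ℂ) • X k)ᴴ = ((a + b : ℝ) : ℂ) • X k := by
    intro k
    rw [Matrix.conjTranspose_smul, (hX k).isHermitian.eq, Complex.star_def, Complex.conj_ofReal,
      ← add_smul, Complex.ofReal_add]
  have h := hdec _ _ (hsmul ha) (hsmul hb)
  simp only [hf ha, hf hb, LinearIsometryEquiv.map_smulₛₗ, Complex.conj_ofReal, hsym, hscalar,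
    matOp_smul, smul_comp, comp_smul, ← Finset.smul_sum, ← add_smul, ← Complex.ofReal_add] at h
  exact (smul_right_injective _ (Complex.ofReal_ne_zero.mpr (add_pos ha hb).ne')) h.symm

/-- Suppose `f` on the product of matrix halfplanes satisfies `f(tZ) = t f(Z)` for
`t > 0`, the identity `f(Z) + f(Λ)* = Σₖ φₖ(Λ)* ((Zₖ + Λₖ*) ⊗ I_M) φₖ(Z)` holds for
all `Z, Λ`, and `f(X) = f(X)*` for tuples `X` of positive definite matrices. Then
for every such `X` and `t > 0`,
`Σₖ [φₖ(tX) − φₖ(X)]* (Xₖ ⊗ I_M) [φₖ(tX) − φₖ(X)] = 0`, and consequently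
`φₖ(tX) = φₖ(X)` for all `k`. -/
theorem phi_homogeneous_on_posdef
    {N : ℕ} (n : Fin N → ℕ) {U M : Type*}
    [NormedAddCommGroup U] [InnerProductSpace ℂ U] [CompleteSpace U]
    [NormedAddCommGroup M] [InnerProductSpace ℂ M] [CompleteSpace M]
    (f : (∀ k, Matrix (Fin (n k)) (Fin (n k)) ℂ) → (U →L[ℂ] U))
    (φ : ∀ k, (∀ k', Matrix (Fin (n k')) (Fin (n k')) ℂ) →
      (U →L[ℂ] PiLp 2 (fun _ : Fin (n k) => M)))
    (hhomf : ∀ t : ℝ, 0 < t → ∀ Z : ∀ k, Matrix (Fin (n k)) (Fin (n k)) ℂ,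
      (∀ k, ((Z k) + (Z k)ᴴ).PosDef) →
      f (fun k => (t : ℂ) • Z k) = (t : ℂ) • f Z)
    (hdec : ∀ Z Λ : ∀ k, Matrix (Fin (n k)) (Fin (n k)) ℂ,
      (∀ k, ((Z k) + (Z k)ᴴ).PosDef) → (∀ k, ((Λ k) + (Λ k)ᴴ).PosDef) →
      f Z + ContinuousLinearMap.adjoint (f Λ) =
        ∑ k, (ContinuousLinearMap.adjoint (φ k Λ)) ∘L
          ((matOp ((Z k) + (Λ k)ᴴ)) ∘L (φ k Z)))
    (hsym : ∀ X : ∀ k, Matrix (Fin (n k)) (Fin (n k)) ℂ,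
      (∀ k, (X k).PosDef) → ContinuousLinearMap.adjoint (f X) = f X) :
    ∀ X : ∀ k, Matrix (Fin (n k)) (Fin (n k)) ℂ, (∀ k, (X k).PosDef) →
      ∀ t : ℝ, 0 < t →
        (∑ k, (ContinuousLinearMap.adjoint
            (φ k (fun k' => (t : ℂ) • X k') - φ k X)) ∘L
          ((matOp (X k)) ∘L (φ k (fun k' => (t : ℂ) • X k') - φ k X)) = 0) ∧
        ∀ k, φ k (fun k' => (t : ℂ) • X k') = φ k X := by
  intro X hX t ht
  have hone : (fun k' => ((1 : ℝ) : ℂ) • X k') = X := by simp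
  have hconst := fun {a b : ℝ} (ha : 0 < a) (hb : 0 < b) =>
    sum_adjoint_phi_smul_comp_matOp_comp_phi_smul hhomf hdec hX (hsym X hX) ha hb
  have htt := hconst ht ht
  have h1t := hconst one_pos ht
  have ht1 := hconst ht one_pos
  have h11 := hconst one_pos one_pos
  rw [hone] at h1t ht1 h11
  have hzero : ∑ k, adjoint (φ k (fun k' => (t : ℂ) • X k') - φ k X) ∘L
      (matOp (X k) ∘L (φ k (fun k' => (t : ℂ) • X k') - φ k X)) = 0 := by
    simp only [adjoint_sub_comp_comp_sub, Finset.sum_add_distrib, Finset.sum_sub_distrib,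
      htt, h1t, ht1, h11]
    abel
  exact ⟨hzero, fun k =>
    sub_eq_zero.mp (eq_zero_of_sum_adjoint_comp_matOp_comp_eq_zero hX hzero k)⟩
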